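/- arXiv:1006.3754 — 3 statements merged into one kernel-verified Lean document; each statement's English description precedes it below -/
import Mathlib

section
/- For the function z(r) = -1 + 2·exp(-r²/2), the map φ : ℝ² → ℝ³ defined by φ(x,y) = (x·Q(x²+y²), y·Q(x²+y²), -1 + 2·exp(-(x²+y²)/2)), where Q(s) = 2(1 - s·q(s))²·√(q(s)) and q(s) = Σ_{n≥0} (-1)ⁿ sⁿ / (2^{n+1}(n+1)!), is smooth (C^∞) at the origin (0,0). -/
open Real

noncomputable def qfun (s : ℝ) : ℝ := ∑' n : ℕ, (-1) ^ n * s ^ n / (2 ^ (n + 1) * (n + 1).factorial)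

noncomputable def Qfun (s : ℝ) : ℝ := 2 * (1 - s * qfun s) ^ 2 * Real.sqrt (qfun s)

noncomputable def lumpPhi (p : ℝ × ℝ) : ℝ × ℝ × ℝ :=
  (p.1 * Qfun (p.1 ^ 2 + p.2 ^ 2), p.2 * Qfun (p.1 ^ 2 + p.2 ^ 2),
    -1 + 2 * Real.exp (-(p.1 ^ 2 + p.2 ^ 2) / 2))

noncomputable def qcoef (n : ℕ) : ℝ := (-1) ^ n / (2 ^ (n + 1) * (n + 1).factorial)

lemma qfun_eq : qfun = FormalMultilinearSeries.ofScalarsSum qcoef := by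
  funext s
  rw [FormalMultilinearSeries.ofScalars_sum_eq]
  unfold qfun qcoef
  exact tsum_congr fun n => by rw [smul_eq_mul]; ring

lemma qcoef_norm_le (n : ℕ) : ‖qcoef n‖ ≤ (1 / 2 : ℝ) ^ n := by
  have hD : (0:ℝ) < 2 ^ (n + 1) * (n + 1).factorial := by positivity
  have : ‖qcoef n‖ = 1 / (2 ^ (n + 1) * (n + 1).factorial) := by
    rw [qcoef, norm_div, norm_pow, norm_neg, norm_one, one_pow, Real.norm_of_nonneg hD.le]
  rw [this, div_pow, one_pow]
  apply one_div_le_one_div_of_le (by positivity)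
  calc (2:ℝ) ^ n ≤ 2 ^ (n + 1) := by
        apply pow_le_pow_right₀ (by norm_num) (Nat.le_succ n)
    _ ≤ 2 ^ (n + 1) * (n + 1).factorial := by
        have h1 : (1:ℝ) ≤ (n + 1).factorial := by
          exact_mod_cast Nat.one_le_iff_ne_zero.mpr (Nat.factorial_ne_zero _)
        nlinarith [pow_pos (by norm_num : (0:ℝ) < 2) (n+1)]

lemma qradius : 0 < (FormalMultilinearSeries.ofScalars ℝ qcoef).radius := by
  have hs : Summable (fun n : ℕ => ‖FormalMultilinearSeries.ofScalars ℝ qcoef n‖ * ((1:NNReal):ℝ) ^ n) := by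
    simp only [NNReal.coe_one, one_pow, mul_one, FormalMultilinearSeries.ofScalars_norm]
    exact Summable.of_nonneg_of_le (fun n => norm_nonneg _) qcoef_norm_le
      (summable_geometric_of_lt_one (by norm_num) (by norm_num))
  have h1 := FormalMultilinearSeries.le_radius_of_summable_norm _ hs
  exact lt_of_lt_of_le zero_lt_one (ENNReal.coe_one ▸ h1)

lemma qfun_analyticAt : AnalyticAt ℝ qfun 0 := by
  rw [qfun_eq]
  exact ((FormalMultilinearSeries.ofScalars ℝ qcoef).hasFPowerSeriesOnBall qradius).analyticAt

lemma qfun_zero : qfun 0 = 1 / 2 := by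
  rw [qfun_eq, FormalMultilinearSeries.ofScalarsSum_zero]
  norm_num [qcoef]

/-- The Cartesian form of the degree-1 hedgehog lump is smooth at the origin. -/
theorem stmt1 : ContDiffAt ℝ (⊤ : ℕ∞) lumpPhi (0, 0) := by
  have hf : ContDiffAt ℝ (⊤ : ℕ∞) (fun p : ℝ × ℝ => p.1 ^ 2 + p.2 ^ 2) (0, 0) :=
    ((contDiff_fst.pow 2).add (contDiff_snd.pow 2)).contDiffAt
  have hf0 : ((0:ℝ), (0:ℝ)).1 ^ 2 + ((0:ℝ), (0:ℝ)).2 ^ 2 = 0 := by norm_num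
  have hq : ContDiffAt ℝ (⊤ : ℕ∞) (fun p : ℝ × ℝ => qfun (p.1 ^ 2 + p.2 ^ 2)) (0, 0) := by
    have h := qfun_analyticAt.contDiffAt (n := (⊤ : WithTop ℕ∞))
    have := ContDiffAt.comp (g := qfun) (f := fun p : ℝ × ℝ => p.1 ^ 2 + p.2 ^ 2)
      (0, 0) (by simpa using (h.of_le (m := ((⊤ : ℕ∞) : WithTop ℕ∞)) le_top)) hf
    exact this
  have hq0 : qfun (((0:ℝ), (0:ℝ)).1 ^ 2 + ((0:ℝ), (0:ℝ)).2 ^ 2) ≠ 0 := by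
    rw [hf0, qfun_zero]; norm_num
  have hsqrt : ContDiffAt ℝ (⊤ : ℕ∞) (fun p : ℝ × ℝ => Real.sqrt (qfun (p.1 ^ 2 + p.2 ^ 2))) (0, 0) := by
    have := ContDiffAt.comp (g := Real.sqrt) (f := fun p : ℝ × ℝ => qfun (p.1 ^ 2 + p.2 ^ 2))
      (0, 0) (Real.contDiffAt_sqrt hq0) hq
    exact this
  have hQ : ContDiffAt ℝ (⊤ : ℕ∞) (fun p : ℝ × ℝ => Qfun (p.1 ^ 2 + p.2 ^ 2)) (0, 0) := by
    simp only [Qfun]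
    exact (contDiffAt_const.mul ((contDiffAt_const.sub (hf.mul hq)).pow 2)).mul hsqrt
  have hexp : ContDiffAt ℝ (⊤ : ℕ∞) (fun p : ℝ × ℝ => -1 + 2 * Real.exp (-(p.1 ^ 2 + p.2 ^ 2) / 2)) (0, 0) := by
    apply contDiffAt_const.add
    apply (contDiffAt_const.mul (ContDiffAt.exp ?_))
    exact (hf.neg).div_const 2
  exact ((contDiffAt_fst.mul hQ).prodMk ((contDiffAt_snd.mul hQ).prodMk hexp)).congr_of_eventuallyEq
    (Filter.Eventually.of_forall fun p => rfl)
end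

section
/- The map α' : (0,∞) × (-π/2, π/2) → (0,∞) × ℝ defined by α'(x,y) = (x·cos²y, tan y) is an area-preserving diffeomorphism, i.e. a bijective smooth map with smooth inverse whose Jacobian determinant is identically 1. -/
open Real Set

lemma det_aux' (A B D : ℝ) :
    LinearMap.det (((A • ContinuousLinearMap.fst ℝ ℝ ℝ + B • ContinuousLinearMap.snd ℝ ℝ ℝ).prod
      (D • ContinuousLinearMap.snd ℝ ℝ ℝ) : ℝ×ℝ →L[ℝ] ℝ×ℝ) : (ℝ×ℝ) →ₗ[ℝ] ℝ×ℝ) = A * D := by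
  rw [← LinearMap.det_toMatrix (Module.Basis.finTwoProd ℝ), Matrix.det_fin_two]
  simp [LinearMap.toMatrix_apply]

lemma hder' (p : ℝ × ℝ) (hc : Real.cos p.2 ≠ 0) :
    HasFDerivAt (fun q : ℝ×ℝ => (q.1 * Real.cos q.2 ^ 2, Real.tan q.2))
      (((Real.cos p.2 ^ 2 • ContinuousLinearMap.fst ℝ ℝ ℝ +
        (-(2 * p.1 * Real.cos p.2 * Real.sin p.2)) • ContinuousLinearMap.snd ℝ ℝ ℝ).prod
        ((1 / Real.cos p.2 ^ 2) • ContinuousLinearMap.snd ℝ ℝ ℝ)) : ℝ×ℝ →L[ℝ] ℝ×ℝ) p := by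
  have hcos : HasFDerivAt (fun q : ℝ×ℝ => Real.cos q.2)
      ((-Real.sin p.2) • ContinuousLinearMap.snd ℝ ℝ ℝ) p :=
    (Real.hasDerivAt_cos p.2).comp_hasFDerivAt p hasFDerivAt_snd
  have h1 := (hasFDerivAt_fst (p := p)).mul (hcos.mul hcos)
  have htan : HasFDerivAt (fun q : ℝ×ℝ => Real.tan q.2)
      ((1 / Real.cos p.2 ^ 2) • ContinuousLinearMap.snd ℝ ℝ ℝ) p :=
    (Real.hasDerivAt_tan hc).comp_hasFDerivAt p hasFDerivAt_snd
  have h2 := h1.prodMk htan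
  have he : (fun q : ℝ×ℝ => (q.1 * Real.cos q.2 ^ 2, Real.tan q.2)) =
      (fun q : ℝ×ℝ => (q.1 * (Real.cos q.2 * Real.cos q.2), Real.tan q.2)) := by
    funext q; rw [pow_two]
  rw [he]
  convert h2 using 2
  case e'_12.e'_15 => rw [pow_two, Pi.mul_apply]; module
  all_goals rfl

/-- The map `α'(x,y) = (x cos² y, tan y)` is an area-preserving diffeomorphism from
`(0,∞) × (-π/2, π/2)` onto `(0,∞) × ℝ`: it is a bijection, smooth with smooth inverse,
and its Jacobian determinant is identically `1`. -/
theorem stmt3 (a : ℝ × ℝ → ℝ × ℝ) (ha : ∀ p, a p = (p.1 * Real.cos p.2 ^ 2, Real.tan p.2))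
    (S : Set (ℝ × ℝ)) (hS : S = (Set.Ioi 0) ×ˢ (Set.Ioo (-(π / 2)) (π / 2)))
    (T : Set (ℝ × ℝ)) (hT : T = (Set.Ioi 0) ×ˢ (Set.univ : Set ℝ)) :
    Set.BijOn a S T ∧
    ContDiffOn ℝ (⊤ : ℕ∞) a S ∧
    (∃ g : ℝ × ℝ → ℝ × ℝ, ContDiffOn ℝ (⊤ : ℕ∞) g T ∧ ∀ p ∈ S, g (a p) = p) ∧
    (∀ p ∈ S, LinearMap.det (fderiv ℝ a p).toLinearMap = 1) := by
  have haf : a = fun p : ℝ × ℝ => (p.1 * Real.cos p.2 ^ 2, Real.tan p.2) := funext ha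
  subst haf hS hT
  set g : ℝ × ℝ → ℝ × ℝ := fun q => (q.1 * (1 + q.2 ^ 2), Real.arctan q.2) with hg
  -- cos is positive on the strip
  have hcpos : ∀ p : ℝ × ℝ, p ∈ (Set.Ioi (0:ℝ)) ×ˢ (Set.Ioo (-(π / 2)) (π / 2)) →
      0 < Real.cos p.2 := by
    intro p hp
    exact Real.cos_pos_of_mem_Ioo hp.2
  have hginv : ∀ p ∈ (Set.Ioi (0:ℝ)) ×ˢ (Set.Ioo (-(π / 2)) (π / 2)),
      g (p.1 * Real.cos p.2 ^ 2, Real.tan p.2) = p := by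
    intro p hp
    have hc := (hcpos p hp).ne'
    have h1 : 1 + Real.tan p.2 ^ 2 = 1 / Real.cos p.2 ^ 2 := by
      rw [Real.tan_eq_sin_div_cos]
      field_simp
      exact Real.cos_sq_add_sin_sq _
    refine Prod.ext ?_ ?_
    · show p.1 * Real.cos p.2 ^ 2 * (1 + Real.tan p.2 ^ 2) = p.1
      rw [h1]; field_simp
    · exact Real.arctan_tan hp.2.1 hp.2.2
  refine ⟨⟨?_, ?_, ?_⟩, ?_, ⟨g, ?_, hginv⟩, ?_⟩
  · -- MapsTo
    intro p hp
    refine ⟨mul_pos hp.1 (pow_pos (hcpos p hp) 2), trivial⟩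
  · -- InjOn
    intro p hp q hq h
    have := hginv p hp
    rw [show (p.1 * Real.cos p.2 ^ 2, Real.tan p.2) = (q.1 * Real.cos q.2 ^ 2, Real.tan q.2) from h]
      at this
    rw [← this, hginv q hq]
  · -- SurjOn
    intro q hq
    have h1 : (0:ℝ) < 1 + q.2 ^ 2 := by positivity
    refine ⟨(q.1 * (1 + q.2 ^ 2), Real.arctan q.2),
      ⟨mul_pos hq.1 h1, Real.neg_pi_div_two_lt_arctan q.2, Real.arctan_lt_pi_div_two q.2⟩, ?_⟩
    have hcs : Real.cos (Real.arctan q.2) ^ 2 = 1 / (1 + q.2 ^ 2) := Real.cos_sq_arctan q.2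
    refine Prod.ext ?_ ?_
    · show q.1 * (1 + q.2 ^ 2) * Real.cos (Real.arctan q.2) ^ 2 = q.1
      rw [hcs]; field_simp
    · exact Real.tan_arctan q.2
  · -- ContDiffOn a S
    intro p hp
    have hc := (hcpos p hp).ne'
    refine ContDiffAt.contDiffWithinAt ?_
    exact (contDiff_fst.mul ((Real.contDiff_cos.comp contDiff_snd).pow 2)).contDiffAt.prodMk
      ((Real.contDiffAt_tan.mpr hc).comp p contDiffAt_snd)
  · -- ContDiffOn g T
    exact ((contDiff_fst.mul (contDiff_const.add (contDiff_snd.pow 2))).prodMk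
      (Real.contDiff_arctan.comp contDiff_snd)).contDiffOn
  · -- Jacobian determinant
    intro p hp
    have hc := (hcpos p hp).ne'
    rw [(hder' p hc).fderiv, det_aux']
    field_simp
end

section
/- For 1/2 ≤ α < 1, the function z(r) = [2^{1-α} - (1-α)r²/2]^{1/(1-α)} - 1, defined for 0 ≤ r ≤ R with R = 2^{1-α/2}(1-α)^{-1/2}, satisfies z(0) = 1, z(R) = -1, and the Bogomol'nyi equation -z'(r)/r = (1 + z(r))^α for 0 < r < R. -/
/-!
With `β = 1 - α`, the profile is `u - 1` where `u = g ^ (1/β)` and `g r = 2^β - β r²/2`.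
Differentiating, `u' = -r g^(1/β - 1) = -r u^α`, which is the Bogomol'nyi equation since `1 + z = u`.
The radius `R` is the zero of `g`, i.e. `β R²/2 = 2^β`, and `g 0 = 2^β` gives `u 0 = 2`.
-/

open Real Set

theorem hasDerivAt_rpow_quadratic_profile {α A r : ℝ} (hα : α ≠ 1)
    (hg : 0 < A - (1 - α) * r ^ 2 / 2) :
    HasDerivAt (fun x => (A - (1 - α) * x ^ 2 / 2) ^ (1 / (1 - α)))
      (-r * ((A - (1 - α) * r ^ 2 / 2) ^ (1 / (1 - α))) ^ α) r := by
  have hβ : 1 - α ≠ 0 := sub_ne_zero.mpr hα.symm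
  have hdg : HasDerivAt (fun x => A - (1 - α) * x ^ 2 / 2) (-((1 - α) * r)) r := by
    refine (((hasDerivAt_pow 2 r).const_mul (1 - α)).div_const 2).const_sub A |>.congr_deriv ?_
    ring
  convert hdg.rpow_const (p := 1 / (1 - α)) (Or.inl hg.ne') using 1
  rw [← rpow_mul hg.le, show 1 / (1 - α) * α = 1 / (1 - α) - 1 by field_simp; ring]
  field_simp

theorem compacton_radius_sq {α : ℝ} (hα : α < 1) :
    (1 - α) * (2 ^ (1 - α / 2) * (1 - α) ^ (-(1 / 2 : ℝ))) ^ 2 / 2 = 2 ^ (1 - α) := by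
  have hβ : 0 < 1 - α := by linarith
  have ha : ((2 : ℝ) ^ (1 - α / 2)) ^ 2 = 2 * 2 ^ (1 - α) := by
    rw [← rpow_natCast, ← rpow_mul zero_le_two, ← rpow_one_add' zero_le_two (by linarith)]
    norm_num
    ring_nf
  have hb : ((1 - α) ^ (-(1 / 2 : ℝ))) ^ 2 = (1 - α)⁻¹ := by
    rw [← rpow_natCast, ← rpow_mul hβ.le]
    norm_num [rpow_neg_one]
  rw [mul_pow, ha, hb]
  field_simp

theorem stmt5_general (α : ℝ) (hα1 : α < 1)
    (z : ℝ → ℝ)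
    (hz : ∀ r, z r = (2 ^ (1 - α) - (1 - α) * r ^ 2 / 2) ^ ((1 : ℝ) / (1 - α)) - 1)
    (R : ℝ) (hR : R = 2 ^ (1 - α / 2) * (1 - α) ^ (-(1 / 2 : ℝ))) :
    z 0 = 1 ∧ z R = -1 ∧
    ∀ r ∈ Set.Ioo 0 R, ∃ z' : ℝ, HasDerivAt z z' r ∧ -(z' / r) = (1 + z r) ^ α := by
  have hβ : 0 < 1 - α := by linarith
  have hRsq : (1 - α) * R ^ 2 / 2 = 2 ^ (1 - α) := hR ▸ compacton_radius_sq hα1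
  refine ⟨?_, ?_, fun r ⟨hr0, hrR⟩ => ?_⟩
  · rw [hz, one_div, pow_two, mul_zero, mul_zero, zero_div, sub_zero,
      rpow_rpow_inv zero_le_two hβ.ne']
    norm_num
  · rw [hz, ← hRsq, sub_self, zero_rpow (by positivity)]
    norm_num
  · have hg : 0 < 2 ^ (1 - α) - (1 - α) * r ^ 2 / 2 := by
      rw [← hRsq]
      nlinarith [mul_lt_mul_of_pos_left (pow_lt_pow_left₀ hrR hr0.le two_ne_zero) hβ]
    have hz1 : 1 + z r = (2 ^ (1 - α) - (1 - α) * r ^ 2 / 2) ^ ((1 : ℝ) / (1 - α)) := by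
      rw [hz]; ring
    refine ⟨-r * (1 + z r) ^ α, ?_, by field_simp⟩
    rw [hz1, funext hz]
    exact (hasDerivAt_rpow_quadratic_profile hα1.ne hg).sub_const 1

/-- For `1/2 ≤ α < 1`, the compacton profile
`z(r) = (2^{1-α} - (1-α) r²/2)^{1/(1-α)} - 1` satisfies `z(0) = 1`, `z(R) = -1`
(where `R = 2^{1-α/2} (1-α)^{-1/2}`), and the Bogomol'nyi equation
`-z'(r)/r = (1+z(r))^α` for `0 < r < R`. -/
theorem stmt5 (α : ℝ) (hα : 1 / 2 ≤ α) (hα1 : α < 1)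
    (z : ℝ → ℝ)
    (hz : ∀ r, z r = (2 ^ (1 - α) - (1 - α) * r ^ 2 / 2) ^ ((1 : ℝ) / (1 - α)) - 1)
    (R : ℝ) (hR : R = 2 ^ (1 - α / 2) * (1 - α) ^ (-(1 / 2 : ℝ))) :
    z 0 = 1 ∧ z R = -1 ∧
    ∀ r ∈ Set.Ioo 0 R, ∃ z' : ℝ, HasDerivAt z z' r ∧ -(z' / r) = (1 + z r) ^ α :=
  stmt5_general α hα1 z hz R hR
end
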